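/- arXiv:1510.06085 — 4 statements merged into one kernel-verified Lean document; each statement's English description precedes it below -/
import Mathlib

section
/- G₁ ≤ G₂ and G₃ ≤ G₂, where Gᵢ = 2∫₀¹ (p − Lᵢ(p)) dp, for any distribution F on (0,∞) with strictly positive quantile function. -/
/-!
Each of the three curves has the form `L(p) = p·Q(p/2)/D(p)`, with `D(p)` equal to the median
`Q(1/2)`, the upper quantile `Q(1 - p/2)`, or the mean of `Q(p/2)` and `Q(1 - p/2)`. Since `Q` is
nondecreasing, each of these denominators lies between `Q(p/2)` and `Q(1 - p/2)`, so `L₂` is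
pointwise the smallest curve, and the Gini index `2∫₀¹ (p - L(p)) dp` is antitone in `L`.
-/

open Set MeasureTheory

namespace GiniQuantile

open intervalIntegral

noncomputable section

def gini (L : ℝ → ℝ) : ℝ := 2 * ∫ p in (0 : ℝ)..1, (p - L p)

def lorenz (Q D : ℝ → ℝ) (p : ℝ) : ℝ := p * Q (p / 2) / D p

theorem gini_le_gini_of_le {L L' : ℝ → ℝ} (hL : IntervalIntegrable L volume 0 1)
    (hL' : IntervalIntegrable L' volume 0 1) (hle : ∀ p ∈ Ioo (0 : ℝ) 1, L p ≤ L' p) :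
    gini L' ≤ gini L := by
  refine mul_le_mul_of_nonneg_left ?_ zero_le_two
  refine integral_mono_on_of_le_Ioo zero_le_one
    (intervalIntegrable_id.sub hL') (intervalIntegrable_id.sub hL) fun p hp => ?_
  linarith [hle p hp]

theorem abs_lorenz_le {Q D : ℝ → ℝ} {p : ℝ} (hp : 0 ≤ p) (hQ : 0 ≤ Q (p / 2))
    (hQD : Q (p / 2) ≤ D p) : |lorenz Q D p| ≤ p := by
  have hD : 0 ≤ D p := hQ.trans hQD
  rw [lorenz, abs_of_nonneg (by positivity)]
  exact div_le_of_le_mul₀ hD hp (mul_le_mul_of_nonneg_left hQD hp)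

theorem intervalIntegrable_lorenz {Q D : ℝ → ℝ} (hQm : Measurable Q) (hDm : Measurable D)
    (hQD : ∀ p ∈ Ioc (0 : ℝ) 1, 0 ≤ Q (p / 2) ∧ Q (p / 2) ≤ D p) :
    IntervalIntegrable (lorenz Q D) volume 0 1 := by
  have hm : Measurable (lorenz Q D) := by unfold lorenz; fun_prop
  refine intervalIntegrable_id.mono_fun' hm.aestronglyMeasurable ?_
  rw [uIoc_of_le zero_le_one]
  refine (ae_restrict_iff' measurableSet_Ioc).2 (Filter.Eventually.of_forall fun p hp => ?_)
  exact abs_lorenz_le hp.1.le (hQD p hp).1 (hQD p hp).2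

theorem gini_lorenz_le {Q D D' : ℝ → ℝ} (hQm : Measurable Q) (hDm : Measurable D)
    (hD'm : Measurable D')
    (hD : ∀ p ∈ Ioc (0 : ℝ) 1, 0 < Q (p / 2) ∧ Q (p / 2) ≤ D p ∧ D p ≤ D' p) :
    gini (lorenz Q D) ≤ gini (lorenz Q D') := by
  refine gini_le_gini_of_le (intervalIntegrable_lorenz hQm hD'm fun p hp => ?_)
    (intervalIntegrable_lorenz hQm hDm fun p hp => ?_) fun p hp => ?_
  · exact ⟨(hD p hp).1.le, (hD p hp).2.1.trans (hD p hp).2.2⟩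
  · exact ⟨(hD p hp).1.le, (hD p hp).2.1⟩
  · obtain ⟨hQ, hQD, hDD'⟩ := hD p (Ioo_subset_Ioc_self hp)
    exact div_le_div_of_nonneg_left (mul_nonneg hp.1.le hQ.le) (hQ.trans_le hQD) hDD'

theorem quantile_half_bounds {Q : ℝ → ℝ} (hQmono : Monotone Q)
    (hQpos : ∀ p ∈ Ioo (0 : ℝ) 1, 0 < Q p) {p : ℝ} (hp : p ∈ Ioc (0 : ℝ) 1) :
    0 < Q (p / 2) ∧ Q (p / 2) ≤ Q (1 / 2) ∧ Q (1 / 2) ≤ Q (1 - p / 2) :=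
  ⟨hQpos _ ⟨by linarith [hp.1], by linarith [hp.2]⟩, hQmono (by linarith [hp.2]),
    hQmono (by linarith [hp.2])⟩

end

end GiniQuantile

open GiniQuantile in
/-- `G₁ ≤ G₂` and `G₃ ≤ G₂`, where `Gᵢ = 2∫₀¹ (p - Lᵢ(p)) dp`, for any distribution with
nondecreasing quantile function `Q` strictly positive on `(0,1)`. -/
theorem stmt_6 (Q : ℝ → ℝ) (hQmono : Monotone Q)
    (hQpos : ∀ p ∈ Set.Ioo (0 : ℝ) 1, 0 < Q p) :
    (2 * ∫ p in (0 : ℝ)..1, (p - p * Q (p / 2) / Q (1 / 2))) ≤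
        (2 * ∫ p in (0 : ℝ)..1, (p - p * Q (p / 2) / Q (1 - p / 2))) ∧
    (2 * ∫ p in (0 : ℝ)..1,
        (p - 2 * p * Q (p / 2) / (Q (p / 2) + Q (1 - p / 2)))) ≤
      (2 * ∫ p in (0 : ℝ)..1, (p - p * Q (p / 2) / Q (1 - p / 2))) := by
  have hQm : Measurable Q := hQmono.measurable
  have hL₃ : (fun p => 2 * p * Q (p / 2) / (Q (p / 2) + Q (1 - p / 2))) =
      lorenz Q (fun p => (Q (p / 2) + Q (1 - p / 2)) / 2) := by
    funext p
    rw [lorenz, div_div_eq_mul_div]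
    ring
  constructor
  · exact gini_lorenz_le hQm measurable_const (by fun_prop) fun p hp =>
      quantile_half_bounds hQmono hQpos hp
  · change gini (fun p => 2 * p * Q (p / 2) / (Q (p / 2) + Q (1 - p / 2))) ≤
      gini (lorenz Q fun p => Q (1 - p / 2))
    rw [hL₃]
    refine gini_lorenz_le hQm (by fun_prop) (by fun_prop) fun p hp => ?_
    obtain ⟨hQ, hQmed, hmedQ⟩ := quantile_half_bounds hQmono hQpos hp
    exact ⟨hQ, by linarith, by linarith⟩
end

section
/- For the Type II Pareto(a) distribution (Q(p)=(1−p)^{−1/a}−1, a>0), the curve L₁(p) = p·((1−p/2)^{−1/a}−1)/(2^{1/a}−1) is convex on (0,1), with L₁''(p) = (1−p/2)^{−1/a}/[a²(p−2)²(2^{1/a}−1)]·[p + a(4−p)] > 0. -/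
/-!
Write `x = 1 - p/2` and `b = -1/a`. The curve is `p (x^b - 1) / c` with `c = 2^{1/a} - 1 > 0`,
and differentiating twice gives `(b(b-1)/4 · p x^{b-2} - b x^{b-1}) / c`. For `b ≤ 0` and `p ≥ 0`
both terms are nonnegative, which already gives convexity on `[0, 2)`; clearing the powers of `x`
turns the expression into the closed form `x^b (p + a(4-p)) / (a² (p-2)² c)`.
-/

open Set Real

section
variable {b c p : ℝ}

theorem hasDerivAt_one_sub_half_rpow (b : ℝ) (hp : p < 2) :
    HasDerivAt (fun p : ℝ => (1 - p / 2) ^ b) (-(b / 2) * (1 - p / 2) ^ (b - 1)) p := by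
  convert (((hasDerivAt_id' p).div_const 2).const_sub 1).rpow_const (p := b)
    (Or.inl (by linarith)) using 1
  ring

theorem hasDerivAt_mul_one_sub_half_rpow (hp : p < 2) :
    HasDerivAt (fun p : ℝ => p * ((1 - p / 2) ^ b - 1) / c)
      (((1 - p / 2) ^ b - 1 - b / 2 * p * (1 - p / 2) ^ (b - 1)) / c) p := by
  refine (((hasDerivAt_id' p).fun_mul
    ((hasDerivAt_one_sub_half_rpow b hp).sub_const 1)).div_const c).congr_deriv ?_
  ring

theorem hasDerivAt_deriv_mul_one_sub_half_rpow (hp : p < 2) :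
    HasDerivAt (fun p : ℝ => ((1 - p / 2) ^ b - 1 - b / 2 * p * (1 - p / 2) ^ (b - 1)) / c)
      ((b * (b - 1) / 4 * p * (1 - p / 2) ^ (b - 2) - b * (1 - p / 2) ^ (b - 1)) / c) p := by
  have h₁ := hasDerivAt_one_sub_half_rpow b hp
  have h₂ := hasDerivAt_one_sub_half_rpow (b - 1) hp
  rw [show b - 1 - 1 = b - 2 by ring] at h₂
  refine (((h₁.sub_const 1).fun_sub
    (((hasDerivAt_id' p).const_mul (b / 2)).fun_mul h₂)).div_const c).congr_deriv ?_
  ring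

theorem deriv_deriv_mul_one_sub_half_rpow (hp : p < 2) :
    deriv (deriv fun p : ℝ => p * ((1 - p / 2) ^ b - 1) / c) p =
      (b * (b - 1) / 4 * p * (1 - p / 2) ^ (b - 2) - b * (1 - p / 2) ^ (b - 1)) / c := by
  have hderiv : deriv (fun p : ℝ => p * ((1 - p / 2) ^ b - 1) / c) =ᶠ[nhds p]
      fun p => ((1 - p / 2) ^ b - 1 - b / 2 * p * (1 - p / 2) ^ (b - 1)) / c := by
    filter_upwards [Iio_mem_nhds hp] with q hq
    exact (hasDerivAt_mul_one_sub_half_rpow hq).deriv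
  rw [hderiv.deriv_eq]
  exact (hasDerivAt_deriv_mul_one_sub_half_rpow hp).deriv

theorem convexOn_mul_one_sub_half_rpow (hb : b ≤ 0) (hc : 0 ≤ c) :
    ConvexOn ℝ (Ico 0 2) fun p : ℝ => p * ((1 - p / 2) ^ b - 1) / c := by
  refine convexOn_of_hasDerivWithinAt2_nonneg (convex_Ico 0 2)
    (f' := fun p => ((1 - p / 2) ^ b - 1 - b / 2 * p * (1 - p / 2) ^ (b - 1)) / c)
    (f'' := fun p => (b * (b - 1) / 4 * p * (1 - p / 2) ^ (b - 2) - b * (1 - p / 2) ^ (b - 1)) / c)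
    (fun p hp => (hasDerivAt_mul_one_sub_half_rpow hp.2).continuousAt.continuousWithinAt)
    (fun p hp => ?_) (fun p hp => ?_) (fun p hp => ?_)
  all_goals rw [interior_Ico] at hp
  · exact (hasDerivAt_mul_one_sub_half_rpow hp.2).hasDerivWithinAt
  · exact (hasDerivAt_deriv_mul_one_sub_half_rpow hp.2).hasDerivWithinAt
  · have hx : 0 ≤ 1 - p / 2 := by linarith [hp.2]
    have hbb : 0 ≤ b * (b - 1) / 4 := by nlinarith
    refine div_nonneg (sub_nonneg_of_le ?_) hc
    calc b * (1 - p / 2) ^ (b - 1) ≤ 0 := mul_nonpos_of_nonpos_of_nonneg hb (rpow_nonneg hx _)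
      _ ≤ _ := mul_nonneg (mul_nonneg hbb hp.1.le) (rpow_nonneg hx _)

end

theorem pareto_second_deriv_eq {a c p : ℝ} (ha : a ≠ 0) (hp : p < 2) :
    (-(1 / a) * (-(1 / a) - 1) / 4 * p * (1 - p / 2) ^ (-(1 / a) - 2)
        - -(1 / a) * (1 - p / 2) ^ (-(1 / a) - 1)) / c =
      (1 - p / 2) ^ (-(1 / a)) / (a ^ 2 * (p - 2) ^ 2 * c) * (p + a * (4 - p)) := by
  rcases eq_or_ne c 0 with rfl | hc
  · simp
  obtain ⟨x, hx, rfl⟩ : ∃ x, 0 < x ∧ p = 2 - 2 * x := ⟨1 - p / 2, by linarith, by ring⟩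
  rw [show 1 - (2 - 2 * x) / 2 = x by ring, rpow_sub hx, rpow_sub hx, rpow_one, rpow_two]
  field_simp [hx.ne']
  ring

theorem pareto_second_deriv_pos {a c p : ℝ} (ha : 0 < a) (hc : 0 < c) (hp₀ : 0 ≤ p) (hp : p < 2) :
    0 < (1 - p / 2) ^ (-(1 / a)) / (a ^ 2 * (p - 2) ^ 2 * c) * (p + a * (4 - p)) := by
  have : 0 < (p - 2) ^ 2 := by nlinarith
  have : 0 < a * (4 - p) := mul_pos ha (by linarith)
  have := rpow_pos_of_pos (show 0 < 1 - p / 2 by linarith) (-(1 / a))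
  positivity

/-- For the Type II Pareto(a) distribution (`Q(p) = (1-p)^{-1/a} - 1`, `a > 0`), the curve
`L₁(p) = p·((1-p/2)^{-1/a} - 1)/(2^{1/a} - 1)` is convex on `(0,1)`, with
`L₁''(p) = (1-p/2)^{-1/a}/(a²(p-2)²(2^{1/a}-1)) · (p + a(4-p)) > 0`. -/
theorem stmt_14 (a : ℝ) (ha : 0 < a) :
    (∀ p ∈ Set.Ioo (0 : ℝ) 1,
      deriv (deriv (fun p : ℝ =>
          p * ((1 - p / 2) ^ (-(1 / a)) - 1) / ((2 : ℝ) ^ (1 / a) - 1))) p =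
        (1 - p / 2) ^ (-(1 / a)) /
            (a ^ 2 * (p - 2) ^ 2 * ((2 : ℝ) ^ (1 / a) - 1)) * (p + a * (4 - p)) ∧
      0 < (1 - p / 2) ^ (-(1 / a)) /
            (a ^ 2 * (p - 2) ^ 2 * ((2 : ℝ) ^ (1 / a) - 1)) * (p + a * (4 - p))) ∧
    ConvexOn ℝ (Set.Ioo (0 : ℝ) 1)
      (fun p : ℝ => p * ((1 - p / 2) ^ (-(1 / a)) - 1) / ((2 : ℝ) ^ (1 / a) - 1)) := by
  have hc : 0 < (2 : ℝ) ^ (1 / a) - 1 := sub_pos.2 (one_lt_rpow one_lt_two (by positivity))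
  refine ⟨fun p ⟨hp₀, hp₁⟩ => ?_, ?_⟩
  · have hp : p < 2 := by linarith
    rw [deriv_deriv_mul_one_sub_half_rpow hp, pareto_second_deriv_eq ha.ne' hp]
    exact ⟨rfl, pareto_second_deriv_pos ha hc hp₀.le hp⟩
  · have hb : -(1 / a) ≤ 0 := by simp [ha.le]
    exact (convexOn_mul_one_sub_half_rpow hb hc.le).subset
      (Ioo_subset_Ico_self.trans (Ico_subset_Ico_right one_le_two)) (convex_Ioo 0 1)
end

section
/- For the Weibull(β) distribution (Q(p)={−ln(1−p)}^{1/β}, β>0), the curve L₁(p)=p·{−ln(1−p/2)}^{1/β}/(ln 2)^{1/β} is convex on (0,1); for this it suffices that the bracketed factor in the expression for L₁'' satisfies 4−p − p/ln(2/(2−p)) + (p/β)/ln(2/(2−p)) > 0 for all p ∈ (0,1), which holds using that p/ln(2/(2−p)) < 2. -/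
open Set Real

private lemma weib_log_pos {p : ℝ} (hp : p ∈ Set.Ioo (0 : ℝ) 1) :
    p / 2 < Real.log (2 / (2 - p)) := by
  obtain ⟨h0, h1⟩ := hp
  have h2 : (0:ℝ) < 2 - p := by linarith
  have h3 : (0:ℝ) < 1 - p/2 := by linarith
  have := Real.log_lt_sub_one_of_pos h3 (ne_of_lt (by linarith))
  have he : Real.log (2 / (2 - p)) = -Real.log (1 - p/2) := by
    rw [show (2:ℝ)/(2-p) = (1 - p/2)⁻¹ by field_simp, Real.log_inv]
  rw [he]; linarith

/-- For the Weibull(β) distribution (`Q(p) = (-ln(1-p))^{1/β}`, `β > 0`), the curve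
`L₁(p) = p·(-ln(1-p/2))^{1/β}/(ln 2)^{1/β}` is convex on `(0,1)`.  Key facts:
`p/ln(2/(2-p)) < 2` on `(0,1)`, and the bracketed factor
`4 - p - p/ln(2/(2-p)) + (p/β)/ln(2/(2-p))` is positive on `(0,1)`. -/
theorem stmt_15 (β : ℝ) (hβ : 0 < β) :
    (∀ p ∈ Set.Ioo (0 : ℝ) 1, p / Real.log (2 / (2 - p)) < 2) ∧
    (∀ p ∈ Set.Ioo (0 : ℝ) 1,
      0 < 4 - p - p / Real.log (2 / (2 - p)) + (p / β) / Real.log (2 / (2 - p))) ∧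
    ConvexOn ℝ (Set.Ioo (0 : ℝ) 1)
      (fun p : ℝ => p * (-Real.log (1 - p / 2)) ^ (1 / β) / (Real.log 2) ^ (1 / β)) := by
  have hpart1 : ∀ p ∈ Set.Ioo (0 : ℝ) 1, p / Real.log (2 / (2 - p)) < 2 := by
    intro p hp
    have hL := weib_log_pos hp
    have hL0 : 0 < Real.log (2 / (2 - p)) := lt_trans (by linarith [hp.1]) hL
    rw [div_lt_iff₀ hL0]; linarith
  have hpart2 : ∀ p ∈ Set.Ioo (0 : ℝ) 1,
      0 < 4 - p - p / Real.log (2 / (2 - p)) + (p / β) / Real.log (2 / (2 - p)) := by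
    intro p hp
    have hL := weib_log_pos hp
    have hL0 : 0 < Real.log (2 / (2 - p)) := lt_trans (by linarith [hp.1]) hL
    have h1 := hpart1 p hp
    have h2 : 0 < (p / β) / Real.log (2 / (2 - p)) :=
      div_pos (div_pos hp.1 hβ) hL0
    have := hp.2
    linarith
  refine ⟨hpart1, hpart2, ?_⟩
  set a : ℝ := 1 / β with ha_def
  have ha : 0 < a := by positivity
  set c : ℝ := (Real.log 2) ^ a with hc_def
  have hc : 0 < c := Real.rpow_pos_of_pos (Real.log_pos (by norm_num)) a
  set g : ℝ → ℝ := fun p => -Real.log (1 - p / 2) with hg_def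
  -- basic facts at a point of Ioo
  have hfacts : ∀ x ∈ Set.Ioo (0:ℝ) 1, 0 < 2 - x ∧ 0 < 1 - x/2 ∧ 0 < g x ∧
      Real.log (2/(2-x)) = g x := by
    intro x hx
    obtain ⟨h0, h1⟩ := hx
    have h2 : (0:ℝ) < 2 - x := by linarith
    have h3 : (0:ℝ) < 1 - x/2 := by linarith
    have he : Real.log (2 / (2 - x)) = -Real.log (1 - x/2) := by
      rw [show (2:ℝ)/(2-x) = (1 - x/2)⁻¹ by field_simp, Real.log_inv]
    have hgpos : 0 < g x := by
      have hw := weib_log_pos (⟨h0, h1⟩ : x ∈ Set.Ioo (0:ℝ) 1)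
      rw [he] at hw
      show (0:ℝ) < -Real.log (1 - x/2)
      linarith
    exact ⟨h2, h3, hgpos, he⟩
  -- derivative of g
  have hgderiv : ∀ x ∈ Set.Ioo (0:ℝ) 1, HasDerivAt g ((2 - x)⁻¹) x := by
    intro x hx
    obtain ⟨h2, h3, hgpos, -⟩ := hfacts x hx
    have h : HasDerivAt (fun p : ℝ => 1 - p / 2) (-(2⁻¹)) x := by
      simpa using ((hasDerivAt_id x).div_const 2).const_sub 1
    have := (h.log (ne_of_gt h3)).neg
    refine this.congr_deriv ?_
    rw [show (1:ℝ) - x/2 = (2-x)/2 by ring]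
    field_simp
  set F1 : ℝ → ℝ := fun p => (g p ^ a + a * p * g p ^ (a - 1) * (2 - p)⁻¹) / c with hF1_def
  have hderiv1 : ∀ x ∈ Set.Ioo (0:ℝ) 1,
      HasDerivAt (fun p : ℝ => p * g p ^ a / c) (F1 x) x := by
    intro x hx
    obtain ⟨h2, h3, hgpos, -⟩ := hfacts x hx
    have hrp : HasDerivAt (fun p => g p ^ a) ((2 - x)⁻¹ * a * g x ^ (a - 1)) x :=
      (hgderiv x hx).rpow_const (Or.inl (ne_of_gt hgpos))
    have := ((hasDerivAt_id x).mul hrp).div_const c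
    refine this.congr_deriv ?_
    simp only [hF1_def, id_eq]
    ring
  set F2 : ℝ → ℝ := fun p => (a * (2 * g p ^ (a-1) * (2-p)⁻¹
      + (a-1) * p * g p ^ (a-2) * ((2-p)⁻¹)^2 + p * g p ^ (a-1) * ((2-p)⁻¹)^2)) / c
    with hF2_def
  have hderiv2 : ∀ x ∈ Set.Ioo (0:ℝ) 1, HasDerivAt F1 (F2 x) x := by
    intro x hx
    obtain ⟨h2, h3, hgpos, -⟩ := hfacts x hx
    have hinv : HasDerivAt (fun p : ℝ => (2 - p)⁻¹) (((2-x)⁻¹)^2) x := by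
      have h : HasDerivAt (fun p : ℝ => 2 - p) (-1) x := by
        simpa using (hasDerivAt_id x).const_sub 2
      have := h.inv (ne_of_gt h2)
      refine this.congr_deriv ?_
      field_simp
    have hrp1 : HasDerivAt (fun p => g p ^ a) ((2 - x)⁻¹ * a * g x ^ (a - 1)) x :=
      (hgderiv x hx).rpow_const (Or.inl (ne_of_gt hgpos))
    have hrp2 : HasDerivAt (fun p => g p ^ (a-1)) ((2 - x)⁻¹ * (a-1) * g x ^ (a - 1 - 1)) x :=
      (hgderiv x hx).rpow_const (Or.inl (ne_of_gt hgpos))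
    have hmul : HasDerivAt (fun p => a * p * g p ^ (a-1) * (2-p)⁻¹)
        ((a * 1 * g x ^ (a-1) + a * x * ((2 - x)⁻¹ * (a-1) * g x ^ (a - 1 - 1))) * (2-x)⁻¹
          + a * x * g x ^ (a-1) * ((2-x)⁻¹)^2) x := by
      exact ((((hasDerivAt_id x).const_mul a).mul hrp2).mul hinv)
    have := (hrp1.add hmul).div_const c
    refine this.congr_deriv ?_
    simp only [hF2_def]
    have hexp : a - 1 - 1 = a - 2 := by ring
    rw [hexp]
    ring
  -- nonnegativity of F2
  have hF2nonneg : ∀ x ∈ Set.Ioo (0:ℝ) 1, 0 ≤ F2 x := by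
    intro x hx
    obtain ⟨h2, h3, hgpos, he⟩ := hfacts x hx
    have hkey := hpart2 x hx
    rw [he] at hkey
    -- multiply through by g x
    have hkey2 : 0 < (4 - x) * g x - x + x * a := by
      have hgne : g x ≠ 0 := ne_of_gt hgpos
      have e : (4 - x - x / g x + (x / β) / g x) * g x = (4 - x) * g x - x + x * a := by
        rw [ha_def]
        field_simp
      exact e ▸ mul_pos hkey hgpos
    have hu : 0 < (2 - x)⁻¹ := inv_pos.mpr h2
    have hg1 : g x ^ (a-1) = g x ^ (a-2) * g x := by
      rw [show a - 1 = (a-2) + 1 by ring, Real.rpow_add_one (ne_of_gt hgpos)]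
    have hg2pos : 0 < g x ^ (a-2) := Real.rpow_pos_of_pos hgpos _
    have hbracket : 0 ≤ 2 * g x ^ (a-1) * (2-x)⁻¹
        + (a-1) * x * g x ^ (a-2) * ((2-x)⁻¹)^2 + x * g x ^ (a-1) * ((2-x)⁻¹)^2 := by
      rw [hg1]
      have hrw : 2 * (g x ^ (a-2) * g x) * (2-x)⁻¹
          + (a-1) * x * g x ^ (a-2) * ((2-x)⁻¹)^2 + x * (g x ^ (a-2) * g x) * ((2-x)⁻¹)^2
          = g x ^ (a-2) * ((2-x)⁻¹)^2 * ((2-x) * (2 * g x) + (a-1) * x + x * g x) := by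
        field_simp
      rw [hrw]
      have hinner : 0 ≤ (2-x) * (2 * g x) + (a-1) * x + x * g x := by nlinarith
      positivity
    have : 0 ≤ a * (2 * g x ^ (a-1) * (2-x)⁻¹
        + (a-1) * x * g x ^ (a-2) * ((2-x)⁻¹)^2 + x * g x ^ (a-1) * ((2-x)⁻¹)^2) / c :=
      div_nonneg (mul_nonneg ha.le hbracket) hc.le
    simpa [hF2_def] using this
  have hD : Convex ℝ (Set.Ioo (0:ℝ) 1) := convex_Ioo 0 1
  have hint : interior (Set.Ioo (0:ℝ) 1) = Set.Ioo (0:ℝ) 1 := isOpen_Ioo.interior_eq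
  refine convexOn_of_hasDerivWithinAt2_nonneg hD ?_ (f' := F1) (f'' := F2) ?_ ?_ ?_
  · intro x hx
    exact ((hderiv1 x hx).continuousAt).continuousWithinAt
  · intro x hx
    rw [hint] at hx ⊢
    exact ((hderiv1 x hx).hasDerivWithinAt)
  · intro x hx
    rw [hint] at hx ⊢
    exact ((hderiv2 x hx).hasDerivWithinAt)
  · intro x hx
    rw [hint] at hx
    exact hF2nonneg x hx
end

section
/- For the lognormal distribution (Q(p)=exp(z_p) with z_p=Φ⁻¹(p)), the curve L₂(p) = p·exp(2z_{p/2}) satisfies L₂''(p) = L₂(p)·[2/(p·φ(z_{p/2})) + (2+z_{p/2})/(2φ²(z_{p/2}))], where φ is the standard normal density; hence L₂ is convex at p whenever 4φ(z_{p/2}) + p(2+z_{p/2}) > 0. -/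
/-!
Write `u(p) = z(p/2)`. Since `z` inverts the strictly increasing `Φ`, whose derivative is `φ`,
the inverse function theorem gives `u' = 1/(2φ(u))`, and `φ' = -xφ` gives `(1/φ(u))' = u/(2φ(u)²)`.
Hence `L₂' = e^{2u}(1 + p/φ(u))` and `L₂'' = e^{2u}(4φ(u) + p(2 + u))/(2φ(u)²)`, which is the
claimed formula and is positive as soon as `4φ(u) + p(2 + u)` is.
-/

open Set Real MeasureTheory Filter Topology

section IntegralIic

variable {f : ℝ → ℝ}

theorem hasDerivAt_integral_Iic (hi : Integrable f) (hc : Continuous f) (x : ℝ) :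
    HasDerivAt (fun u => ∫ t in Iic u, f t) (f x) x := by
  have hsplit : (fun u => ∫ t in Iic u, f t) = fun u => (∫ t in Iic 0, f t) + ∫ t in 0..u, f t := by
    funext u
    linarith [intervalIntegral.integral_Iic_sub_Iic (μ := volume) (a := 0) (b := u)
      hi.integrableOn hi.integrableOn]
  rw [hsplit]
  exact (intervalIntegral.integral_hasDerivAt_right (hc.intervalIntegrable 0 x)
    (hc.stronglyMeasurableAtFilter _ _) hc.continuousAt).const_add _

theorem strictMono_integral_Iic (hi : Integrable f) (hc : Continuous f) (hpos : ∀ x, 0 < f x) :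
    StrictMono fun u => ∫ t in Iic u, f t := by
  intro a b hab
  have hdiff := intervalIntegral.integral_Iic_sub_Iic (μ := volume) (a := a) (b := b)
    hi.integrableOn hi.integrableOn
  have hgap : 0 < ∫ t in a..b, f t :=
    intervalIntegral.intervalIntegral_pos_of_pos (hc.intervalIntegrable a b) hpos hab
  show ∫ t in Iic a, f t < ∫ t in Iic b, f t
  linarith

end IntegralIic

section RightInverse

variable {Φ z : ℝ → ℝ} {U : Set ℝ} {p : ℝ}

theorem StrictMono.continuousAt_of_rightInvOn (hΦ : StrictMono Φ) (hc : Continuous Φ)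
    (hU : IsOpen U) (hz : RightInvOn z Φ U) (hp : p ∈ U) : ContinuousAt z p := by
  have hzmono : StrictMonoOn z U := fun a ha b hb hab => by
    rwa [← hΦ.lt_iff_lt, hz ha, hz hb]
  have himage : Φ ⁻¹' U ⊆ z '' U := fun y hy => ⟨Φ y, hy, hΦ.injective (hz hy)⟩
  refine hzmono.continuousAt_of_image_mem_nhds (hU.mem_nhds hp) (mem_of_superset ?_ himage)
  exact (hU.preimage hc).mem_nhds (by rwa [mem_preimage, hz hp])

theorem StrictMono.hasDerivAt_of_rightInvOn {φ : ℝ → ℝ} (hΦ : StrictMono Φ)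
    (hd : ∀ x, HasDerivAt Φ (φ x) x) (hU : IsOpen U) (hz : RightInvOn z Φ U) (hp : p ∈ U)
    (hφ : φ (z p) ≠ 0) : HasDerivAt z (φ (z p))⁻¹ p :=
  HasDerivAt.of_local_left_inverse
    (hΦ.continuousAt_of_rightInvOn (continuous_iff_continuousAt.2 fun x => (hd x).continuousAt)
      hU hz hp)
    (hd (z p)) hφ (eventually_of_mem (hU.mem_nhds hp) fun _ hq => hz hq)

end RightInverse

section StandardNormal

variable {φ : ℝ → ℝ}

theorem stdNormalPDF_pos (hφ : ∀ x, φ x = exp (-(x ^ 2) / 2) / √(2 * π)) (x : ℝ) : 0 < φ x := by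
  rw [hφ]
  positivity

theorem continuous_stdNormalPDF (hφ : ∀ x, φ x = exp (-(x ^ 2) / 2) / √(2 * π)) :
    Continuous φ := by
  rw [funext hφ]
  fun_prop

theorem integrable_stdNormalPDF (hφ : ∀ x, φ x = exp (-(x ^ 2) / 2) / √(2 * π)) :
    Integrable φ := by
  have hform : φ = fun x => exp (-2⁻¹ * x ^ 2) / √(2 * π) := by
    funext x
    rw [hφ]
    congr 2
    ring
  rw [hform]
  exact (integrable_exp_neg_mul_sq (by norm_num)).div_const _

theorem hasDerivAt_stdNormalPDF (hφ : ∀ x, φ x = exp (-(x ^ 2) / 2) / √(2 * π)) (x : ℝ) :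
    HasDerivAt φ (-x * φ x) x := by
  rw [funext hφ]
  refine (((hasDerivAt_pow 2 x).fun_neg.div_const 2).exp.div_const (√(2 * π))).congr_deriv ?_
  push_cast
  ring

end StandardNormal

section Curve

variable {φ z : ℝ → ℝ} {p : ℝ}

theorem hasDerivAt_comp_half (hz : HasDerivAt z (φ (z (p / 2)))⁻¹ (p / 2)) :
    HasDerivAt (fun q => z (q / 2)) ((φ (z (p / 2)))⁻¹ / 2) p :=
  (hz.comp p ((hasDerivAt_id' p).div_const 2)).congr_deriv (by ring)

theorem hasDerivAt_exp_two_mul_comp_half (hz : HasDerivAt z (φ (z (p / 2)))⁻¹ (p / 2)) :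
    HasDerivAt (fun q => exp (2 * z (q / 2))) (exp (2 * z (p / 2)) / φ (z (p / 2))) p :=
  ((hasDerivAt_comp_half hz).const_mul 2).exp.congr_deriv (by ring)

theorem hasDerivAt_mul_exp_two_mul_comp_half (hz : HasDerivAt z (φ (z (p / 2)))⁻¹ (p / 2)) :
    HasDerivAt (fun q => q * exp (2 * z (q / 2)))
      (exp (2 * z (p / 2)) * (1 + p / φ (z (p / 2)))) p :=
  ((hasDerivAt_id' p).fun_mul (hasDerivAt_exp_two_mul_comp_half hz)).congr_deriv (by ring)

theorem deriv_deriv_mul_exp_two_mul_comp_half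
    (hz : ∀ᶠ q in 𝓝 p, HasDerivAt z (φ (z (q / 2)))⁻¹ (q / 2))
    (hφ : HasDerivAt φ (-z (p / 2) * φ (z (p / 2))) (z (p / 2))) (hφ0 : φ (z (p / 2)) ≠ 0) :
    deriv (deriv fun q => q * exp (2 * z (q / 2))) p =
      exp (2 * z (p / 2)) * (4 * φ (z (p / 2)) + p * (2 + z (p / 2)))
        / (2 * φ (z (p / 2)) ^ 2) := by
  have hderiv : deriv (fun q => q * exp (2 * z (q / 2))) =ᶠ[𝓝 p]
      fun q => exp (2 * z (q / 2)) * (1 + q / φ (z (q / 2))) :=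
    hz.mono fun q hq => (hasDerivAt_mul_exp_two_mul_comp_half hq).deriv
  have hzp := hz.self_of_nhds
  have hφu : HasDerivAt (fun q => φ (z (q / 2))) (-z (p / 2) * φ (z (p / 2)) *
      ((φ (z (p / 2)))⁻¹ / 2)) p := hφ.comp p (hasDerivAt_comp_half hzp)
  have hratio := (hasDerivAt_id' p).fun_div hφu hφ0
  rw [hderiv.deriv_eq,
    ((hasDerivAt_exp_two_mul_comp_half hzp).fun_mul (hratio.const_add 1)).deriv]
  field_simp
  ring

end Curve

/-- For the standard lognormal distribution (`Q(p) = exp(z_p)`, `z_p = Φ⁻¹(p)`), the curve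
`L₂(p) = p·exp(2 z_{p/2})` satisfies
`L₂''(p) = L₂(p)·(2/(p φ(z_{p/2})) + (2 + z_{p/2})/(2 φ(z_{p/2})²))`,
where `φ` is the standard normal density; hence `L₂` has positive second derivative at `p`
(is convex at `p`) whenever `4 φ(z_{p/2}) + p(2 + z_{p/2}) > 0`. -/
theorem stmt_16 (φ Φ z : ℝ → ℝ)
    (hφ : ∀ x, φ x = Real.exp (-(x ^ 2) / 2) / Real.sqrt (2 * Real.pi))
    (hΦ : ∀ x, Φ x = ∫ t in Set.Iic x, φ t)
    (hz : ∀ p ∈ Set.Ioo (0 : ℝ) 1, Φ (z p) = p) :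
    ∀ p ∈ Set.Ioo (0 : ℝ) 1,
      (deriv (deriv (fun p : ℝ => p * Real.exp (2 * z (p / 2)))) p =
        p * Real.exp (2 * z (p / 2)) *
          (2 / (p * φ (z (p / 2))) + (2 + z (p / 2)) / (2 * (φ (z (p / 2))) ^ 2))) ∧
      (0 < 4 * φ (z (p / 2)) + p * (2 + z (p / 2)) →
        0 < deriv (deriv (fun p : ℝ => p * Real.exp (2 * z (p / 2)))) p) := by
  have hφi := integrable_stdNormalPDF hφ
  have hφc := continuous_stdNormalPDF hφ
  obtain rfl : Φ = fun x => ∫ t in Iic x, φ t := funext hΦ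
  have hz' : ∀ q ∈ Ioo (0 : ℝ) 1, HasDerivAt z (φ (z q))⁻¹ q := fun q hq =>
    (strictMono_integral_Iic hφi hφc (stdNormalPDF_pos hφ)).hasDerivAt_of_rightInvOn
      (hasDerivAt_integral_Iic hφi hφc) isOpen_Ioo hz hq (stdNormalPDF_pos hφ _).ne'
  intro p ⟨hp0, hp1⟩
  have hhalf : ∀ᶠ q in 𝓝 p, HasDerivAt z (φ (z (q / 2)))⁻¹ (q / 2) :=
    eventually_of_mem (Ioo_mem_nhds hp0 (by linarith : p < 2)) fun q ⟨hq0, hq2⟩ =>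
      hz' _ ⟨by linarith, by linarith⟩
  have hpos := stdNormalPDF_pos hφ (z (p / 2))
  rw [deriv_deriv_mul_exp_two_mul_comp_half hhalf (hasDerivAt_stdNormalPDF hφ _) hpos.ne']
  refine ⟨by field_simp; ring, fun hnum => by positivity⟩
end
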